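/- Let α > −1/2 and γ ∈ ℝ, and define for m ∈ ℕ the polynomials M_{2m}(x;α,γ) = (−1)^m (α+1/2)_m · Σ_{k=0}^{m} (−m)_k (x²−γ²)^k/((α+1/2)_k k!) and M_{2m+1}(x;α,γ) = (−1)^m (α+3/2)_m (x−γ) · Σ_{k=0}^{m} (−m)_k (x²−γ²)^k/((α+3/2)_k k!). Then for every n ≥ 1 the identity x·M_n(x;α,γ) = M_{n+1}(x;α,γ) + (−1)^n γ·M_n(x;α,γ) + u_n·M_{n−1}(x;α,γ) holds as an identity of polynomials in x, where u_{2m} = m and u_{2m+1} = m + α + 1/2; moreover x·M_0 = M_1 + γ·M_0. -/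
import Mathlib


open Polynomial Finset

/-- The Pochhammer symbol `(a)ₖ = a(a+1)⋯(a+k-1)` for real `a`. -/
noncomputable def pochR (a : ℝ) (k : ℕ) : ℝ := (ascPochhammer ℝ k).eval a

/-- The `-1` Meixner–Pollaczek polynomials `Mₙ(x;α,γ)`, given by their explicit
terminating ₁F₁-type hypergeometric expressions. -/
noncomputable def M1MP (α γ : ℝ) (n : ℕ) : Polynomial ℝ :=
  let m : ℕ := n / 2
  if Even n then
    C ((-1 : ℝ) ^ m * pochR (α + 1 / 2) m) *
      ∑ k ∈ range (m + 1),
        C (pochR (-(m : ℝ)) k / (pochR (α + 1 / 2) k * (k.factorial : ℝ))) *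
          (X ^ 2 - C (γ ^ 2)) ^ k
  else
    C ((-1 : ℝ) ^ m * pochR (α + 3 / 2) m) * (X - C γ) *
      ∑ k ∈ range (m + 1),
        C (pochR (-(m : ℝ)) k / (pochR (α + 3 / 2) k * (k.factorial : ℝ))) *
          (X ^ 2 - C (γ ^ 2)) ^ k

/-- The recurrence coefficient `uₙ` of the `-1` Meixner–Pollaczek polynomials:
`u_{2m} = m`, `u_{2m+1} = m + α + 1/2`. -/
noncomputable def M1MPu (α : ℝ) (n : ℕ) : ℝ :=
  if Even n then ((n / 2 : ℕ) : ℝ) else ((n / 2 : ℕ) : ℝ) + α + 1 / 2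


lemma pochR_zero (a : ℝ) : pochR a 0 = 1 := by simp [pochR]

lemma pochR_succ (a : ℝ) (k : ℕ) : pochR a (k+1) = pochR a k * (a + k) :=
  ascPochhammer_succ_eval k a

lemma pochR_succ_left (a : ℝ) (k : ℕ) : pochR a (k+1) = a * pochR (a+1) k := by
  simp [pochR, ascPochhammer_succ_left, eval_comp]

lemma pochR_add (a : ℝ) (n m : ℕ) : pochR a (n + m) = pochR a n * pochR (a + n) m := by
  have := congrArg (Polynomial.eval a) (ascPochhammer_mul (S := ℝ) n m)
  simpa [pochR, eval_comp] using this.symm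

lemma pochR_pos {a : ℝ} (ha : 0 < a) (k : ℕ) : 0 < pochR a k := by
  induction k with
  | zero => simp [pochR_zero]
  | succ k ih => rw [pochR_succ]; positivity

lemma pochR_ne {a : ℝ} (ha : 0 < a) (k : ℕ) : pochR a k ≠ 0 := (pochR_pos ha k).ne'

lemma pochR_nat_neg {m k : ℕ} (h : m < k) : pochR (-(m:ℝ)) k = 0 := by
  induction k with
  | zero => omega
  | succ k ih =>
    rcases Nat.lt_or_ge m k with h' | h'
    · rw [pochR_succ, ih h', zero_mul]
    · have : m = k := by omega
      subst this
      rw [pochR_succ]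
      simp

lemma factR_ne (k : ℕ) : (k.factorial : ℝ) ≠ 0 := Nat.cast_ne_zero.mpr k.factorial_ne_zero

/-- `(m+1)(-m)_k = (m+1-k)(-(m+1))_k`. -/
lemma pochP1 (m k : ℕ) :
    ((m:ℝ)+1) * pochR (-(m:ℝ)) k = ((m:ℝ)+1-k) * pochR (-((m:ℝ)+1)) k := by
  have h1 : pochR (-((m:ℝ)+1)) (k+1) = pochR (-((m:ℝ)+1)) k * (-((m:ℝ)+1) + k) :=
    pochR_succ _ k
  have h2 : pochR (-((m:ℝ)+1)) (k+1) = (-((m:ℝ)+1)) * pochR (-(m:ℝ)) k := by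
    rw [pochR_succ_left]; ring_nf
  nlinarith [h1, h2]

noncomputable def Ssum (c t : ℝ) (m : ℕ) : ℝ :=
  ∑ k ∈ range (m+1), pochR (-(m:ℝ)) k / (pochR c k * (k.factorial : ℝ)) * t ^ k

lemma lemA (c t : ℝ) (hc : 0 < c) (m : ℕ) :
    pochR c (m+1) * Ssum c t (m+1) =
      pochR (c+1) (m+1) * Ssum (c+1) t (m+1)
        - ((m:ℝ)+1) * pochR (c+1) m * Ssum (c+1) t m := by
  have hc1 : (0:ℝ) < c + 1 := by linarith
  have h2 : (∑ k ∈ range (m+2), pochR (-(m:ℝ)) k / (pochR (c+1) k * (k.factorial : ℝ)) * t ^ k)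
      = Ssum (c+1) t m := by
    rw [Finset.sum_range_succ, pochR_nat_neg (Nat.lt_succ_self m)]
    simp [Ssum]
  rw [Ssum, Ssum, ← h2, Finset.mul_sum, Finset.mul_sum, Finset.mul_sum, ← Finset.sum_sub_distrib]
  apply Finset.sum_congr rfl
  intro k hk
  simp only [Finset.mem_range] at hk
  push_cast
  by_cases hk' : k < m + 1
  · -- k ≤ m
    obtain ⟨j, rfl⟩ : ∃ j, m = k + j := ⟨m - k, by omega⟩
    have e1 : pochR c (k + j + 1) = pochR c k * ((c+k) * pochR (c+1+k) j) := by
      rw [show k+j+1 = k+(j+1) from by omega, pochR_add, pochR_succ_left,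
        show c+(k:ℝ)+1 = c+1+k from by ring]
    have e2 : pochR (c+1) (k+j+1) = pochR (c+1) k * (pochR (c+1+k) j * (c+1+k+j)) := by
      rw [show k+j+1 = k+(j+1) from by omega, pochR_add, pochR_succ]
    have e3 : pochR (c+1) (k+j) = pochR (c+1) k * pochR (c+1+k) j := pochR_add _ k j
    have e4 := pochP1 (k+j) k
    push_cast at e4 ⊢
    set A := pochR (-((k:ℝ) + (j:ℝ))) k with hA
    set B := pochR (-((k:ℝ) + (j:ℝ) + 1)) k with hB
    have hne : ((k:ℝ)+(j:ℝ)+1) ≠ 0 := by positivity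
    have hA' : A = ((j:ℝ)+1)/((k:ℝ)+(j:ℝ)+1) * B := by
      field_simp
      linear_combination e4
    rw [e1, e2, e3, hA']
    have h5 := pochR_ne hc k
    have h6 := pochR_ne hc1 k
    have h7 := factR_ne k
    field_simp
    ring
  · -- k = m+1
    have hkm : k = m + 1 := by omega
    subst hkm
    rw [pochR_nat_neg (Nat.lt_succ_self m)]
    have h5 := pochR_ne hc (m+1)
    have h6 := pochR_ne hc1 (m+1)
    have h7 := factR_ne (m+1)
    field_simp
    ring

lemma lemB (c t : ℝ) (hc : 0 < c) (m : ℕ) :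
    pochR (c+1) m * t * Ssum (c+1) t m =
      -(pochR c (m+1) * Ssum c t (m+1)) + (c + m) * pochR c m * Ssum c t m := by
  have hc1 : (0:ℝ) < c + 1 := by linarith
  have h2 : (∑ k ∈ range (m+2), pochR (-(m:ℝ)) k / (pochR c k * (k.factorial : ℝ)) * t ^ k)
      = Ssum c t m := by
    rw [Finset.sum_range_succ, pochR_nat_neg (Nat.lt_succ_self m)]
    simp [Ssum]
  rw [Ssum, Ssum, ← h2, Finset.mul_sum, Finset.mul_sum, Finset.mul_sum,
    ← Finset.sum_neg_distrib, ← Finset.sum_add_distrib]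
  conv_rhs => rw [Finset.sum_range_succ']
  have h0 : -(pochR c (m+1) * (pochR (-((m:ℝ)+1)) 0 / (pochR c 0 * (Nat.factorial 0 : ℝ)) * t ^ 0))
      + (c + m) * pochR c m * (pochR (-(m:ℝ)) 0 / (pochR c 0 * (Nat.factorial 0 : ℝ)) * t ^ 0) = 0 := by
    rw [pochR_zero, pochR_zero, pochR_zero, pochR_succ]
    ring_nf
  push_cast at h0 ⊢
  rw [h0, add_zero]
  apply Finset.sum_congr rfl
  intro k hk
  simp only [Finset.mem_range] at hk
  have hkm : k ≤ m := by omega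
  have r1 : pochR (-((m:ℝ)+1)) (k+1) = (-((m:ℝ)+1)) * pochR (-(m:ℝ)) k := by
    rw [pochR_succ_left, show (-((m:ℝ)+1)+1) = -(m:ℝ) from by ring]
  have r2 : pochR (-(m:ℝ)) (k+1) = pochR (-(m:ℝ)) k * (-(m:ℝ)+k) := pochR_succ _ _
  rw [r1, r2]
  obtain ⟨j, rfl⟩ : ∃ j, m = k + j := ⟨m - k, by omega⟩
  have hcast : ((k+1 : ℕ) : ℝ) = (k:ℝ)+1 := by push_cast; ring
  rcases Nat.eq_zero_or_pos j with rfl | hj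
  · -- j = 0
    have eA : pochR c (k+0+1) = pochR c k * (c+k) := pochR_succ c k
    rw [eA]
    have h5 := pochR_ne hc k
    have h6 := pochR_ne hc1 k
    have h7 := factR_ne k
    have h8 : (c + (k:ℝ)) ≠ 0 := by positivity
    rw [Nat.factorial_succ]
    push_cast
    field_simp
    ring
  · obtain ⟨j', rfl⟩ : ∃ j', j = j' + 1 := ⟨j - 1, by omega⟩
    have eL : pochR (c+1) (k+(j'+1)) = pochR (c+1) k * (pochR (c+1+(k:ℝ)) j' * (c+1+(k:ℝ)+j')) := by
      rw [pochR_add, pochR_succ]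
    have eA : pochR c (k+(j'+1)+1) = pochR c (k+1) * (pochR (c+1+(k:ℝ)) j' * (c+1+(k:ℝ)+j')) := by
      rw [show k+(j'+1)+1 = (k+1)+(j'+1) from by omega, pochR_add, hcast,
        show c+((k:ℝ)+1) = c+1+(k:ℝ) from by ring, pochR_succ (c+1+(k:ℝ)) j']
    have eB : pochR c (k+(j'+1)) = pochR c (k+1) * pochR (c+1+(k:ℝ)) j' := by
      rw [show k+(j'+1) = (k+1)+j' from by omega, pochR_add, hcast,
        show c+((k:ℝ)+1) = c+1+(k:ℝ) from by ring]
    rw [eL, eA, eB]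
    have h5 := pochR_ne hc (k+1)
    have h6 := pochR_ne hc1 k
    have h7 := factR_ne k
    rw [Nat.factorial_succ]
    push_cast
    field_simp
    ring

lemma eval_M1MP_even (α γ x : ℝ) (m : ℕ) :
    (M1MP α γ (2*m)).eval x
      = (-1:ℝ)^m * pochR (α+1/2) m * Ssum (α+1/2) (x^2 - γ^2) m := by
  rw [M1MP]
  simp only [Nat.mul_div_cancel_left _ (by norm_num : 0 < 2)]
  rw [if_pos (even_two_mul m)]
  simp only [eval_mul, eval_finset_sum, eval_C, eval_pow, eval_sub, eval_X, Ssum,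
    Finset.mul_sum]

lemma eval_M1MP_odd (α γ x : ℝ) (m : ℕ) :
    (M1MP α γ (2*m+1)).eval x
      = (-1:ℝ)^m * pochR (α+3/2) m * (x - γ) * Ssum (α+3/2) (x^2 - γ^2) m := by
  rw [M1MP]
  have hd : (2*m+1)/2 = m := by omega
  simp only [hd]
  rw [if_neg (by simp [Nat.even_add_one, Nat.even_mul])]
  simp only [eval_mul, eval_finset_sum, eval_C, eval_pow, eval_sub, eval_X, Ssum,
    Finset.mul_sum]

/-- the explicit `-1` Meixner–Pollaczek polynomials satisfy the monic
three-term recurrence `x Mₙ = M_{n+1} + (-1)ⁿ γ Mₙ + uₙ M_{n-1}` (and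
`x M₀ = M₁ + γ M₀`). -/
theorem M1MeixnerPollaczek_recurrence (α γ : ℝ) (hα : α > -(1 / 2)) :
    (∀ n : ℕ, 1 ≤ n →
      X * M1MP α γ n =
        M1MP α γ (n + 1) + C ((-1 : ℝ) ^ n * γ) * M1MP α γ n
          + C (M1MPu α n) * M1MP α γ (n - 1)) ∧
    X * M1MP α γ 0 = M1MP α γ 1 + C γ * M1MP α γ 0 := by
  have hc : (0:ℝ) < α + 1/2 := by linarith
  have hc31 : α + 1/2 + 1 = α + 3/2 := by ring
  constructor
  · intro n hn
    rcases Nat.even_or_odd n with he | ho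
    · -- n = 2*(m+1)
      obtain ⟨m, hm⟩ := he
      obtain ⟨m', rfl⟩ : ∃ m', m = m' + 1 := ⟨m - 1, by omega⟩
      have hn2 : n = 2*(m'+1) := by omega
      subst hn2
      have h1 : 2*(m'+1)+1 = 2*(m'+1)+1 := rfl
      have h3 : 2*(m'+1) - 1 = 2*m'+1 := by omega
      rw [h3]
      have hu : M1MPu α (2*(m'+1)) = ((m':ℝ)+1) := by
        rw [M1MPu, if_pos (even_two_mul _)]
        push_cast [Nat.mul_div_cancel_left _ (by norm_num : 0 < 2)]
        ring
      rw [hu]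
      apply Polynomial.funext
      intro x
      simp only [eval_add, eval_mul, eval_C, eval_X]
      rw [eval_M1MP_even, eval_M1MP_odd, eval_M1MP_odd]
      have hA := lemA (α+1/2) (x^2 - γ^2) hc m'
      rw [hc31] at hA
      have hpow : ((-1:ℝ))^(2*(m'+1)) = 1 := by
        rw [pow_mul]; norm_num
      rw [hpow]
      push_cast
      linear_combination ((-1:ℝ)^(m'+1) * (x - γ)) * hA
    · -- n = 2*m+1
      obtain ⟨m, rfl⟩ := ho
      have h1 : 2*m+1+1 = 2*(m+1) := by omega
      have h3 : 2*m+1-1 = 2*m := by omega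
      rw [h1, h3]
      have hu : M1MPu α (2*m+1) = (m:ℝ) + α + 1/2 := by
        rw [M1MPu, if_neg (by simp [Nat.even_add_one, Nat.even_mul])]
        norm_num [show (2*m+1)/2 = m from by omega]
      rw [hu]
      apply Polynomial.funext
      intro x
      simp only [eval_add, eval_mul, eval_C, eval_X]
      rw [eval_M1MP_even, eval_M1MP_even, eval_M1MP_odd]
      have hB := lemB (α+1/2) (x^2 - γ^2) hc m
      rw [hc31] at hB
      have hpow : ((-1:ℝ))^(2*m+1) = -1 := by
        rw [pow_succ, pow_mul]; norm_num
      rw [hpow]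
      push_cast
      linear_combination ((-1:ℝ)^m) * hB
  · apply Polynomial.funext
    intro x
    have e0 := eval_M1MP_even α γ x 0
    have e1 := eval_M1MP_odd α γ x 0
    norm_num at e0 e1
    simp only [eval_add, eval_mul, eval_C, eval_X]
    rw [e0, e1]
    simp [Ssum, pochR]
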